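/- arXiv:1101.0599 — 8 statements merged into one kernel-verified Lean document; each statement's English description precedes it below -/
import Mathlib

section
/- If $A = \{a_1, \ldots, a_k\}$ is a set of $k$ relatively prime positive integers, then the number $p_A(n)$ of partitions of $n$ with parts in $A$ satisfies $p_A(n) = \frac{n^{k-1}}{(k-1)!\,a_1 a_2 \cdots a_k} + O(n^{k-2})$. -/
open Filter

/-- `f` is a representation of `n` with parts in `A` and multiplicities in `M`:
`n = ∑ a ∈ A, m_a * a` with each nonzero multiplicity lying in `M`. -/
def IsRepr (A M : Set ℕ) (n : ℕ) (f : ℕ →₀ ℕ) : Prop :=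
  (∀ a ∈ f.support, a ∈ A) ∧ (∀ a ∈ f.support, f a ∈ M) ∧ f.sum (fun a m => m * a) = n

/-- number of partitions of `n` with parts in `A` and multiplicities in `M` -/
noncomputable def pAM (A M : Set ℕ) (n : ℕ) : ℕ :=
  Nat.card {f : ℕ →₀ ℕ // IsRepr A M n f}

/-- number of partitions of `n` with parts in `A` (unrestricted multiplicities) -/
noncomputable def pA (A : Set ℕ) (n : ℕ) : ℕ :=
  pAM A {m | 0 < m} n

/-- counting function of a set of positive integers -/
noncomputable def cnt (S : Set ℕ) (x : ℝ) : ℕ :=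
  Nat.card {a : ℕ // a ∈ S ∧ (a : ℝ) ≤ x}

/-!
Induct on `A`, carrying for sets that need not be coprime the main term
`mainTerm A n = [d ∣ n] · d n^(k-1) / ((k-1)! ∏ a)`, where `d = gcd A` and `k = #A`.
Adding a part `a` gives `p_{A ∪ {a}}(n) = ∑_{t ≤ n, t ≡ n (mod a)} p_A(t)`, so the errors of `p_A`
add up to `O(n^(k-1))`. By the Chinese remainder theorem the `t ≡ n (mod a)` with `d ∣ t` form one
residue class modulo `lcm(a, d)` when `gcd(a, d) ∣ n`, and none otherwise. Telescoping `x^k` along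
that class gives `∑ t^(k-1) = n^k / (k · lcm(a, d)) + O(n^(k-1))`, and `gcd(a, d) · lcm(a, d) = a d`
turns this into the main term of `A ∪ {a}`.
-/

open Finset

abbrev PartitionIn (A : Set ℕ) (n : ℕ) : Type :=
  {f : ℕ →₀ ℕ // ↑f.support ⊆ A ∧ Finsupp.weight id f = n}

lemma pA_eq_natCard (A : Set ℕ) (n : ℕ) : pA A n = Nat.card (PartitionIn A n) := by
  refine Nat.card_congr (Equiv.subtypeEquivRight fun f => ?_)
  simp [IsRepr, Finsupp.weight_apply, Set.subset_def, Nat.pos_iff_ne_zero]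

lemma finite_partitionIn {A : Finset ℕ} (hA : 0 ∉ A) (n : ℕ) : Finite (PartitionIn A n) := by
  refine Set.Finite.to_subtype ((A.finsupp fun _ => range (n + 1)).finite_toSet.subset ?_)
  rintro f ⟨hsupp, hweight⟩
  refine mem_finsupp_iff.mpr ⟨by exact_mod_cast hsupp, fun a ha => mem_range_succ_iff.mpr ?_⟩
  exact hweight ▸ Finsupp.le_weight id (ne_of_mem_of_not_mem ha hA) f

lemma Finsupp.weight_eq_smul_add_weight_erase {σ M R : Type*} [Semiring R] [AddCommMonoid M]
    [Module R M] (w : σ → M) (f : σ →₀ R) (a : σ) :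
    weight w f = f a • w a + weight w (f.erase a) := by
  conv_lhs => rw [← single_add_erase a f]
  rw [map_add, weight_single]

noncomputable def partitionInInsertEquiv {A : Finset ℕ} {a : ℕ} (ha : 0 < a) (haA : a ∉ A)
    (n : ℕ) : PartitionIn ↑(insert a A) n ≃ Σ j : Fin (n / a + 1), PartitionIn ↑A (n - j * a) where
  toFun f :=
    have hf : f.1 a * a + Finsupp.weight id (f.1.erase a) = n :=
      (Finsupp.weight_eq_smul_add_weight_erase id f.1 a).symm.trans f.2.2
    ⟨⟨f.1 a, Nat.lt_succ_of_le ((Nat.le_div_iff_mul_le ha).mpr (by omega))⟩, f.1.erase a, by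
      refine ⟨fun x hx => ?_, by simp only; omega⟩
      rw [Finsupp.support_erase, coe_erase] at hx
      exact (mem_insert.mp (f.2.1 hx.1)).resolve_left hx.2⟩
  invFun g := ⟨Finsupp.single a (g.1 : ℕ) + g.2.1, by
    refine ⟨fun x hx => ?_, ?_⟩
    · rcases mem_union.mp (Finsupp.support_add hx) with h | h
      · exact mem_insert.mpr (.inl (mem_singleton.mp (Finsupp.support_single_subset h)))
      · exact mem_insert_of_mem (g.2.2.1 h)
    · have := Nat.mul_le_of_le_div a _ _ (Nat.lt_succ_iff.mp g.1.2)
      rw [map_add, Finsupp.weight_single, smul_eq_mul, id, g.2.2.2]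
      omega⟩
  left_inv f := Subtype.ext (Finsupp.single_add_erase a f.1)
  right_inv g := by
    have hga : g.2.1 a = 0 := Finsupp.notMem_support_iff.mp fun h => haA (g.2.2.1 h)
    refine Sigma.subtype_ext (Fin.ext ?_) ?_
    · simp [hga]
    · simp [Finsupp.erase_add, Finsupp.erase_of_notMem_support, hga]

lemma sum_range_sub_mul_eq_sum_filter_modEq {M : Type*} [AddCommMonoid M] {a : ℕ} (ha : 0 < a)
    (n : ℕ) (f : ℕ → M) :
    ∑ j ∈ range (n / a + 1), f (n - j * a) = ∑ t ∈ (range (n + 1)).filter (· ≡ n [MOD a]), f t := by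
  refine sum_nbij' (fun j => n - j * a) (fun t => (n - t) / a) (fun j hj => ?_) (fun t ht => ?_)
    (fun j hj => ?_) (fun t ht => ?_) (fun _ _ => rfl)
  · have hja : j * a ≤ n := Nat.mul_le_of_le_div a j n (Nat.lt_succ_iff.mp (mem_range.mp hj))
    simp only [mem_filter, mem_range]
    refine ⟨by omega, (Nat.modEq_iff_dvd' (Nat.sub_le n _)).mpr ?_⟩
    rw [Nat.sub_sub_self hja]
    exact dvd_mul_left a j
  · exact mem_range.mpr (Nat.lt_succ_of_le (Nat.div_le_div_right (Nat.sub_le n t)))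
  · have hja : j * a ≤ n := Nat.mul_le_of_le_div a j n (Nat.lt_succ_iff.mp (mem_range.mp hj))
    rw [Nat.sub_sub_self hja, Nat.mul_div_cancel j ha]
  · simp only [mem_filter, mem_range] at ht
    have hdvd : a ∣ n - t := (Nat.modEq_iff_dvd' (by omega)).mp ht.2
    rw [Nat.div_mul_cancel hdvd]
    omega

lemma pA_insert {A : Finset ℕ} {a : ℕ} (ha : 0 < a) (haA : a ∉ A) (hA : 0 ∉ A) (n : ℕ) :
    pA ↑(insert a A) n = ∑ t ∈ (range (n + 1)).filter (· ≡ n [MOD a]), pA ↑A t := by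
  have := finite_partitionIn hA
  rw [← sum_range_sub_mul_eq_sum_filter_modEq ha, pA_eq_natCard,
    Nat.card_congr (partitionInInsertEquiv ha haA n), Nat.card_sigma,
    ← Fin.sum_univ_eq_sum_range (fun j => pA ↑A (n - j * a))]
  simp only [pA_eq_natCard]

lemma pA_empty (n : ℕ) : pA ∅ n = if n = 0 then 1 else 0 := by
  have hzero (f : PartitionIn ∅ n) : f.1 = 0 :=
    Finsupp.support_eq_empty.mp (coe_eq_empty.mp (Set.subset_empty_iff.mp f.2.1))
  rw [pA_eq_natCard]
  split_ifs with hn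
  · subst hn
    exact Nat.card_eq_one_iff_exists.mpr ⟨⟨0, by simp⟩, fun f => Subtype.ext (hzero f)⟩
  · have : IsEmpty (PartitionIn ∅ n) := ⟨fun f => hn (by simpa [hzero f] using f.2.2.symm)⟩
    exact Nat.card_of_isEmpty

lemma pA_singleton {a : ℕ} (ha : 0 < a) (n : ℕ) :
    pA ↑({a} : Finset ℕ) n = if a ∣ n then 1 else 0 := by
  rw [← insert_empty_eq, pA_insert ha (notMem_empty a) (notMem_empty 0), coe_empty]
  simp [pA_empty, sum_ite_eq', Nat.ModEq.comm, Nat.modEq_zero_iff_dvd]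

section PowerSums

variable {R : Type*} [CommRing R] [LinearOrder R] [IsStrictOrderedRing R]

lemma pow_succ_add_mul_sub_le {u v : R} (hu : 0 ≤ u) (hv : 0 ≤ v) (p : ℕ) :
    u ^ (p + 1) + (p + 1) * u ^ p * (v - u) ≤ v ^ (p + 1) := by
  simpa using pow_add_mul_le_add_pow hu (by linarith : 0 ≤ 2 * u + (v - u)) (p + 1)

lemma mul_sum_range_pow_le_pow_sub_pow {x₀ L : R} (hx₀ : 0 ≤ x₀) (hL : 0 ≤ L) (p N : ℕ) :
    (p + 1) * L * ∑ i ∈ range N, (x₀ + i * L) ^ p ≤ (x₀ + N * L) ^ (p + 1) - x₀ ^ (p + 1) := by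
  induction N with
  | zero => simp
  | succ N ih =>
    have := pow_succ_add_mul_sub_le (u := x₀ + N * L) (v := x₀ + (N + 1) * L) (by positivity)
      (by positivity) p
    push_cast
    rw [sum_range_succ]
    nlinarith

lemma pow_sub_pow_le_mul_sum_range_pow {x₀ L : R} (hx₀ : 0 ≤ x₀) (hL : 0 ≤ L) (p N : ℕ) :
    (x₀ + N * L) ^ (p + 1) - x₀ ^ (p + 1) ≤
      (p + 1) * L * ∑ i ∈ range N, (x₀ + (i + 1) * L) ^ p := by
  induction N with
  | zero => simp
  | succ N ih =>
    have := pow_succ_add_mul_sub_le (u := x₀ + (N + 1) * L) (v := x₀ + N * L) (by positivity)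
      (by positivity) p
    push_cast
    rw [sum_range_succ]
    nlinarith

end PowerSums

lemma abs_sum_range_pow_sub_le {R : Type*} [Field R] [LinearOrder R] [IsStrictOrderedRing R]
    {x₀ L y : R} {N : ℕ} (hx₀ : 0 ≤ x₀) (hx₀L : x₀ ≤ L) (hL : 1 ≤ L) (hy : 0 ≤ y)
    (hyX : y ≤ x₀ + N * L) (hXy : x₀ + N * L ≤ y + L) (p : ℕ) :
    |∑ i ∈ range N, (x₀ + i * L) ^ p - y ^ (p + 1) / ((p + 1) * L)| ≤ 2 * L ^ p * (y + 1) ^ p := by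
  set T := ∑ i ∈ range N, (x₀ + i * L) ^ p
  set X := x₀ + N * L with hX
  set D : R := (p + 1) * L
  set B := L ^ p * (y + 1) ^ p
  have hD : 0 < D := by positivity
  have hlower : D * T ≤ X ^ (p + 1) - x₀ ^ (p + 1) :=
    mul_sum_range_pow_le_pow_sub_pow hx₀ (by linarith) p N
  have hupper : X ^ (p + 1) - x₀ ^ (p + 1) ≤ D * (T + X ^ p) := by
    have hshift := sum_range_succ' (fun i => (x₀ + i * L) ^ p) N
    rw [sum_range_succ, ← hX, Nat.cast_zero, zero_mul, add_zero] at hshift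
    push_cast at hshift
    calc _ ≤ D * ∑ i ∈ range N, (x₀ + (i + 1) * L) ^ p :=
          pow_sub_pow_le_mul_sum_range_pow hx₀ (by linarith) p N
      _ ≤ D * (T + X ^ p) := by gcongr; nlinarith [pow_nonneg hx₀ p]
  have hDXB : D * X ^ p ≤ D * B := by
    rw [show B = (L * (y + 1)) ^ p by rw [mul_pow]]
    gcongr
    nlinarith [mul_le_mul_of_nonneg_right hL hy]
  have hXy' : X ^ (p + 1) ≤ y ^ (p + 1) + D * X ^ p := by
    have := pow_succ_add_mul_sub_le (u := X) (v := y) (by linarith) hy p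
    have : (p + 1) * X ^ p * (X - y) ≤ D * X ^ p := by
      rw [show D * X ^ p = (p + 1) * X ^ p * L by ring]
      gcongr
      linarith
    linarith
  have hyX' : y ^ (p + 1) ≤ X ^ (p + 1) := pow_le_pow_left₀ hy hyX _
  have hx₀B : x₀ ^ (p + 1) ≤ D * B :=
    calc x₀ ^ (p + 1) ≤ L ^ (p + 1) := pow_le_pow_left₀ hx₀ hx₀L _
      _ = L * L ^ p * 1 * 1 := by ring
      _ ≤ L * L ^ p * (p + 1) * (y + 1) ^ p := by
        gcongr
        · linarith [(Nat.cast_nonneg p : (0 : R) ≤ p)]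
        · exact one_le_pow₀ (by linarith)
      _ = D * B := by ring
  have hx₀p : 0 ≤ x₀ ^ (p + 1) := by positivity
  have hq : D * (y ^ (p + 1) / D) = y ^ (p + 1) := mul_div_cancel₀ _ hD.ne'
  rw [abs_sub_le_iff, show 2 * L ^ p * (y + 1) ^ p = 2 * B by ring]
  constructor <;> refine le_of_mul_le_mul_left ?_ hD <;> linarith

-- `(n + L - r % L) / L` is the number of `t ≤ n` with `t ≡ r [MOD L]`, also when `r % L > n`.
lemma sum_filter_modEq_eq_sum_range {M : Type*} [AddCommMonoid M] {L : ℕ} (hL : 0 < L)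
    (r n : ℕ) (f : ℕ → M) :
    ∑ t ∈ (range (n + 1)).filter (· ≡ r [MOD L]), f t =
      ∑ i ∈ range ((n + L - r % L) / L), f (r % L + i * L) := by
  have hr : r % L < L := Nat.mod_lt r hL
  symm
  refine sum_nbij' (fun i => r % L + i * L) (fun t => t / L) (fun i hi => ?_) (fun t ht => ?_)
    (fun i _ => ?_) (fun t ht => ?_) (fun _ _ => rfl)
  · have := (Nat.le_div_iff_mul_le hL).mp (mem_range.mp hi)
    rw [mem_filter, mem_range, Nat.ModEq, Nat.add_mul_mod_self_right, Nat.mod_mod]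
    exact ⟨by rw [Nat.succ_mul] at this; omega, rfl⟩
  · rw [mem_filter, mem_range, Nat.ModEq] at ht
    have := Nat.div_add_mod t L
    refine mem_range.mpr ((Nat.le_div_iff_mul_le hL).mpr ?_)
    rw [Nat.succ_mul, ← Nat.mul_comm L]
    omega
  · simp only [Nat.add_mul_div_right _ _ hL, Nat.div_eq_of_lt hr, zero_add]
  · rw [mem_filter, Nat.ModEq] at ht
    have := Nat.div_add_mod t L
    rw [← ht.2]
    linarith [Nat.mul_comm L (t / L)]

lemma abs_sum_filter_modEq_pow_sub_le {L : ℕ} (hL : 0 < L) (r p n : ℕ) :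
    |∑ t ∈ (range (n + 1)).filter (· ≡ r [MOD L]), (t : ℝ) ^ p - (n : ℝ) ^ (p + 1) / ((p + 1) * L)|
      ≤ 2 * L ^ p * (n + 1) ^ p := by
  have hr : r % L < L := Nat.mod_lt r hL
  have hN : n ≤ r % L + (n + L - r % L) / L * L ∧ r % L + (n + L - r % L) / L * L ≤ n + L := by
    have := Nat.div_mul_le_self (n + L - r % L) L
    have := Nat.lt_div_mul_add (a := n + L - r % L) hL
    omega
  rw [sum_filter_modEq_eq_sum_range hL]
  push_cast
  exact abs_sum_range_pow_sub_le (Nat.cast_nonneg _) (by exact_mod_cast hr.le)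
    (by exact_mod_cast hL) (Nat.cast_nonneg n) (by exact_mod_cast hN.1) (by exact_mod_cast hN.2) p

lemma Nat.exists_modEq_lcm_iff {a d n : ℕ} (h : Nat.gcd a d ∣ n) :
    ∃ r, ∀ t, (t ≡ n [MOD a] ∧ d ∣ t) ↔ t ≡ r [MOD Nat.lcm a d] := by
  obtain ⟨r, hra, hrd⟩ := Nat.chineseRemainder' ((Nat.modEq_zero_iff_dvd).mpr h)
  refine ⟨r, fun t => ⟨fun ⟨hta, htd⟩ => ?_, fun ht => ?_⟩⟩
  · exact Nat.mod_lcm (hta.trans hra.symm) (((Nat.modEq_zero_iff_dvd).mpr htd).trans hrd.symm)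
  · exact ⟨(ht.of_dvd (Nat.dvd_lcm_left a d)).trans hra,
      (Nat.modEq_zero_iff_dvd).mp ((ht.of_dvd (Nat.dvd_lcm_right a d)).trans hrd)⟩

lemma Nat.gcd_dvd_of_modEq_of_dvd {a d n t : ℕ} (ht : t ≡ n [MOD a]) (hd : d ∣ t) :
    Nat.gcd a d ∣ n :=
  ((ht.of_dvd (Nat.gcd_dvd_left a d)).dvd_iff dvd_rfl).mp ((Nat.gcd_dvd_right a d).trans hd)

noncomputable def mainCoeff (A : Finset ℕ) : ℝ :=
  (A.gcd id : ℕ) / ((#A - 1).factorial * ∏ a ∈ A, (a : ℝ))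

noncomputable def mainTerm (A : Finset ℕ) (n : ℕ) : ℝ :=
  if A.gcd id ∣ n then mainCoeff A * n ^ (#A - 1) else 0

lemma mainCoeff_nonneg (A : Finset ℕ) : 0 ≤ mainCoeff A := by
  unfold mainCoeff
  positivity

lemma Finset.gcd_id_pos {A : Finset ℕ} (hA : A.Nonempty) (hpos : ∀ a ∈ A, 0 < a) :
    0 < A.gcd id := by
  obtain ⟨b, hb⟩ := hA
  exact Nat.pos_of_ne_zero fun h => (hpos b hb).ne' (gcd_eq_zero_iff.mp h b hb)

lemma mainCoeff_insert {A : Finset ℕ} {a : ℕ} (ha : 0 < a) (haA : a ∉ A) (hA : A.Nonempty)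
    (hpos : ∀ b ∈ A, 0 < b) :
    mainCoeff (insert a A) = mainCoeff A / (#A * Nat.lcm a (A.gcd id)) := by
  obtain ⟨p, hp⟩ : ∃ p, #A = p + 1 := Nat.exists_eq_add_one.mpr hA.card_pos
  have hgL : (Nat.gcd a (A.gcd id) : ℝ) * Nat.lcm a (A.gcd id) = a * A.gcd id := by
    exact_mod_cast Nat.gcd_mul_lcm a (A.gcd id)
  have : (a : ℝ) ≠ 0 := by exact_mod_cast ha.ne'
  have : (Nat.lcm a (A.gcd id) : ℝ) ≠ 0 := by
    exact_mod_cast (Nat.lcm_pos ha (A.gcd_id_pos hA hpos)).ne'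
  have : ∏ b ∈ A, (b : ℝ) ≠ 0 := prod_ne_zero_iff.mpr fun b hb => by exact_mod_cast (hpos b hb).ne'
  have : (p.factorial : ℝ) ≠ 0 := by positivity
  simp only [mainCoeff, gcd_insert, id_eq, gcd_eq_nat_gcd, card_insert_of_notMem haA,
    prod_insert haA, hp, Nat.add_sub_cancel, Nat.factorial_succ]
  push_cast
  field_simp
  linear_combination hgL

lemma pA_singleton_eq_mainTerm {a : ℕ} (ha : 0 < a) (n : ℕ) :
    (pA ↑({a} : Finset ℕ) n : ℝ) = mainTerm {a} n := by
  have : (a : ℝ) ≠ 0 := by exact_mod_cast ha.ne'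
  rw [pA_singleton ha]
  split_ifs <;> simp [mainTerm, mainCoeff, *]

lemma abs_sum_mainTerm_sub_mainTerm_insert_le {A : Finset ℕ} {a : ℕ} (ha : 0 < a) (haA : a ∉ A)
    (hA : A.Nonempty) (hpos : ∀ b ∈ A, 0 < b) :
    ∃ K, ∀ n, |∑ t ∈ (range (n + 1)).filter (· ≡ n [MOD a]), mainTerm A t -
      mainTerm (insert a A) n| ≤ K * (n + 1) ^ (#A - 1) := by
  obtain ⟨p, hp⟩ : ∃ p, #A = p + 1 := Nat.exists_eq_add_one.mpr hA.card_pos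
  have hL : 0 < Nat.lcm a (A.gcd id) := Nat.lcm_pos ha (A.gcd_id_pos hA hpos)
  refine ⟨mainCoeff A * (2 * Nat.lcm a (A.gcd id) ^ p), fun n => ?_⟩
  simp only [mainTerm, mainCoeff_insert ha haA hA hpos, gcd_insert, id_eq, gcd_eq_nat_gcd,
    card_insert_of_notMem haA, hp, Nat.add_sub_cancel, ← sum_filter, ← mul_sum, filter_filter]
  split_ifs with hg
  · obtain ⟨r, hr⟩ := Nat.exists_modEq_lcm_iff hg
    rw [filter_congr fun t _ => hr t, Nat.cast_add_one, div_mul_eq_mul_div, mul_div_assoc,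
      ← mul_sub, abs_mul, abs_of_nonneg (mainCoeff_nonneg A), mul_assoc]
    exact mul_le_mul_of_nonneg_left (abs_sum_filter_modEq_pow_sub_le hL r p n) (mainCoeff_nonneg A)
  · rw [filter_false_of_mem fun t _ ht => hg (Nat.gcd_dvd_of_modEq_of_dvd ht.1 ht.2)]
    simp only [sum_empty, mul_zero, sub_zero, abs_zero]
    have := mainCoeff_nonneg A
    positivity

lemma exists_abs_pA_insert_sub_mainTerm_le {A : Finset ℕ} {a : ℕ} (ha : 0 < a) (haA : a ∉ A)
    (hA : A.Nonempty) (hpos : ∀ b ∈ A, 0 < b) :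
    ∃ K, ∀ n, |pA ↑(insert a A) n - mainTerm (insert a A) n| ≤
      ∑ t ∈ range (n + 1), |pA ↑A t - mainTerm A t| + K * (n + 1) ^ (#A - 1) := by
  obtain ⟨K, hK⟩ := abs_sum_mainTerm_sub_mainTerm_insert_le ha haA hA hpos
  refine ⟨K, fun n => ?_⟩
  set T := (range (n + 1)).filter (· ≡ n [MOD a])
  have hrec : (pA ↑(insert a A) n : ℝ) = ∑ t ∈ T, (pA ↑A t : ℝ) := by
    rw [pA_insert ha haA fun h => (hpos 0 h).false]
    push_cast
    rfl
  calc |pA ↑(insert a A) n - mainTerm (insert a A) n|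
      = |∑ t ∈ T, (pA ↑A t - mainTerm A t) +
          (∑ t ∈ T, mainTerm A t - mainTerm (insert a A) n)| := by
        rw [hrec, sum_sub_distrib]
        ring_nf
    _ ≤ ∑ t ∈ T, |pA ↑A t - mainTerm A t| + K * (n + 1) ^ (#A - 1) :=
        (abs_add_le _ _).trans (add_le_add (abs_sum_le_sum_abs _ _) (hK n))
    _ ≤ ∑ t ∈ range (n + 1), |pA ↑A t - mainTerm A t| + K * (n + 1) ^ (#A - 1) := by
        gcongr
        exact filter_subset _ _

lemma sum_range_abs_pA_sub_mainTerm_le {A : Finset ℕ} (hA : A.Nonempty) (hpos : ∀ a ∈ A, 0 < a)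
    {C : ℝ} (hC : ∀ n, |pA ↑A n - mainTerm A n| ≤ C * (n + 1) ^ (#A - 2)) (n : ℕ) :
    ∑ t ∈ range (n + 1), |pA ↑A t - mainTerm A t| ≤ C * (n + 1) ^ (#A - 1) := by
  have hC0 : 0 ≤ C := by simpa using (abs_nonneg _).trans (hC 0)
  obtain hA1 | hA2 := (Nat.one_le_iff_ne_zero.mpr hA.card_pos.ne').eq_or_lt
  · obtain ⟨b, rfl⟩ := card_eq_one.mp hA1.symm
    simp only [pA_singleton_eq_mainTerm (hpos b (mem_singleton_self b)), sub_self, abs_zero,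
      sum_const_zero]
    positivity
  · calc ∑ t ∈ range (n + 1), |pA ↑A t - mainTerm A t|
        ≤ ∑ t ∈ range (n + 1), C * ((n : ℝ) + 1) ^ (#A - 2) := by
          refine sum_le_sum fun t ht => (hC t).trans ?_
          gcongr
          exact_mod_cast mem_range_succ_iff.mp ht
      _ = C * (n + 1) ^ (#A - 1) := by
          rw [sum_const, card_range, nsmul_eq_mul, show #A - 1 = #A - 2 + 1 by omega, pow_succ]
          push_cast
          ring

theorem exists_abs_pA_sub_mainTerm_le {A : Finset ℕ} (hA : A.Nonempty) (hpos : ∀ a ∈ A, 0 < a) :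
    ∃ C, ∀ n, |pA ↑A n - mainTerm A n| ≤ C * (n + 1) ^ (#A - 2) := by
  induction hA using Finset.Nonempty.cons_induction with
  | singleton a =>
    refine ⟨0, fun n => ?_⟩
    rw [pA_singleton_eq_mainTerm (hpos a (mem_singleton_self a)), sub_self, abs_zero, zero_mul]
  | cons a A haA hA ih =>
    rw [cons_eq_insert] at hpos ⊢
    have hposA : ∀ b ∈ A, 0 < b := fun b hb => hpos b (mem_insert_of_mem hb)
    obtain ⟨C, hC⟩ := ih hposA
    obtain ⟨K, hK⟩ :=
      exists_abs_pA_insert_sub_mainTerm_le (hpos a (mem_insert_self a A)) haA hA hposA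
    refine ⟨C + K, fun n => (hK n).trans ?_⟩
    rw [card_insert_of_notMem haA, Nat.add_sub_add_right, add_mul]
    exact add_le_add_left (sum_range_abs_pA_sub_mainTerm_le hA hposA hC n) _

theorem stmt0 (A : Finset ℕ) (k : ℕ) (hk : 0 < k) (hcard : A.card = k)
    (hpos : ∀ a ∈ A, 0 < a) (hgcd : A.gcd id = 1) :
    (fun n : ℕ => (pA ↑A n : ℝ) -
        (n : ℝ) ^ (k - 1) / ((k - 1).factorial * ∏ a ∈ A, (a : ℝ)))
      =O[atTop] (fun n : ℕ => (n : ℝ) ^ (k - 2)) := by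
  obtain ⟨C, hC⟩ := exists_abs_pA_sub_mainTerm_le (card_pos.mp (hcard ▸ hk)) hpos
  have hmain (n : ℕ) :
      mainTerm A n = (n : ℝ) ^ (k - 1) / ((k - 1).factorial * ∏ a ∈ A, (a : ℝ)) := by
    simp only [mainTerm, mainCoeff, hgcd, hcard, one_dvd, if_true, Nat.cast_one]
    ring
  have herror : (fun n : ℕ => (pA ↑A n : ℝ) - mainTerm A n) =O[atTop]
      (fun n : ℕ => ((n : ℝ) + 1) ^ (k - 2)) :=
    Asymptotics.IsBigO.of_bound C (Eventually.of_forall fun n => by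
      rw [Real.norm_eq_abs, Real.norm_of_nonneg (by positivity), ← hcard]
      exact hC n)
  have hsucc : (fun n : ℕ => (n : ℝ) + 1) =O[atTop] (fun n : ℕ => (n : ℝ)) :=
    Asymptotics.IsBigO.of_bound 2 ((eventually_ge_atTop 1).mono fun n hn => by
      have : (1 : ℝ) ≤ n := by exact_mod_cast hn
      rw [Real.norm_of_nonneg (by positivity), Real.norm_of_nonneg (by positivity)]
      linarith)
  simpa only [hmain] using herror.trans (hsucc.pow (k - 2))
end

section
/- If $A$ is an infinite set of positive integers with $\gcd(A) = 1$, then the partition function $p_A(n)$ has superpolynomial growth, i.e., $\lim_{n \to \infty} \frac{\log p_A(n)}{\log n} = \infty$. -/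
open Filter

/-!
Since `gcd A = 1`, some finite `B ⊆ A` already represents every sufficiently large integer
(the Frobenius problem). Take `2k` further parts `S ⊆ A \ B`: each of them may be used with any
multiplicity up to `q = ⌊√n⌋`, and the remainder is then represented with parts from `B`.
Distinct multiplicity vectors on `S` give distinct partitions, so
`p_A(n) ≥ (⌊√n⌋ + 1) ^ (2k) > n ^ k` for large `n`.
-/

open Finsupp

lemma isRepr_pos_iff {A : Set ℕ} {n : ℕ} {f : ℕ →₀ ℕ} :
    IsRepr A {m | 0 < m} n f ↔ f ∈ supported ℕ ℕ A ∧ linearCombination ℕ id f = n := by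
  simp [IsRepr, mem_supported, linearCombination_apply, Set.subset_def, Nat.pos_iff_ne_zero]

lemma finite_isRepr {A : Set ℕ} (hpos : ∀ a ∈ A, 0 < a) (M : Set ℕ) (n : ℕ) :
    {f | IsRepr A M n f}.Finite := by
  refine (Set.finite_Icc 0 (indicator (Finset.range (n + 1)) fun _ _ => n)).subset ?_
  rintro f ⟨hA, -, hn⟩
  refine ⟨zero_le, fun a => ?_⟩
  by_cases ha : a ∈ f.support
  · have hterm : f a * a ≤ n := hn ▸ Finset.single_le_sum (f := fun a => f a * a)
      (fun _ _ => Nat.zero_le _) ha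
    have h1 : 1 ≤ f a := Nat.one_le_iff_ne_zero.2 (mem_support_iff.1 ha)
    have h2 : 1 ≤ a := hpos a (hA a ha)
    rw [indicator_of_mem (Finset.mem_range_succ_iff.2 (by nlinarith))]
    nlinarith
  · simp [notMem_support_iff.1 ha]

lemma exists_finset_forall_ge_mem_span {A : Set ℕ} (hgcd : Nat.setGcd A = 1) :
    ∃ B : Finset ℕ, ↑B ⊆ A ∧ ∃ N, ∀ r ≥ N,
      ∃ c ∈ supported ℕ ℕ (B : Set ℕ), linearCombination ℕ id c = r := by
  obtain ⟨B, N, hBA, hB⟩ := Nat.exists_mem_span_nat_finset_of_ge A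
  refine ⟨B, hBA, N, fun r hr => ?_⟩
  have hr : r ∈ Submodule.span ℕ (id '' (B : Set ℕ)) := by
    rw [Set.image_id]; exact hB r hr (hgcd ▸ one_dvd r)
  exact (mem_span_image_iff_linearCombination ℕ).1 hr

lemma pow_card_le_pA {A : Set ℕ} {B S : Finset ℕ} (hpos : ∀ a ∈ A, 0 < a) (hBA : ↑B ⊆ A)
    (hSA : ↑S ⊆ A \ ↑B) {N q n : ℕ}
    (hB : ∀ r ≥ N, ∃ c ∈ supported ℕ ℕ (B : Set ℕ), linearCombination ℕ id c = r)
    (hn : N + q * ∑ s ∈ S, s ≤ n) : (q + 1) ^ S.card ≤ pA A n := by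
  choose c hcB hc using hB
  let e : (S → Fin (q + 1)) → ℕ →₀ ℕ := fun m => indicator S fun s hs => m ⟨s, hs⟩
  have he_le (m) : linearCombination ℕ id (e m) ≤ q * ∑ s ∈ S, s := by
    rw [linearCombination_apply,
      sum_indicator_index_eq_sum_attach (h := fun i a => a • id i) _ fun _ _ => zero_smul ℕ _,
      Finset.mul_sum, ← Finset.sum_attach S]
    exact Finset.sum_le_sum fun s _ => Nat.mul_le_mul_right _ (Nat.le_of_lt_succ (m s).2)
  have hN (m) : n - linearCombination ℕ id (e m) ≥ N := by have := he_le m; omega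
  have hrep (m) : IsRepr A {m | 0 < m} n (c _ (hN m) + e m) := by
    refine isRepr_pos_iff.2 ⟨add_mem (supported_mono hBA (hcB _ _))
      (supported_mono (hSA.trans Set.sdiff_subset) ((mem_supported _ _).2 ?_)), ?_⟩
    · exact_mod_cast support_indicator_subset _ _
    · have := he_le m
      rw [map_add, hc]
      omega
  have hrep_apply (m) (s : S) : (c _ (hN m) + e m) s = m s := by
    have hcs : c _ (hN m) s = 0 := by
      by_contra h
      exact (hSA s.2).2 (hcB _ _ (mem_support_iff.2 h))
    rw [Finsupp.add_apply, hcs, zero_add, indicator_of_mem s.2]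
  have : Finite {f // IsRepr A {m | 0 < m} n f} := (finite_isRepr hpos _ n).to_subtype
  calc (q + 1) ^ S.card = Nat.card (S → Fin (q + 1)) := by simp
    _ ≤ pA A n := Nat.card_le_card_of_injective (fun m => ⟨_, hrep m⟩) fun m m' h =>
        funext fun s => Fin.ext <| by
          simpa only [hrep_apply] using congrArg (fun f => f.1 (s : ℕ)) h

lemma eventually_pow_le_pA {A : Set ℕ} (hA : A.Infinite) (hpos : ∀ a ∈ A, 0 < a)
    (hgcd : Nat.setGcd A = 1) (k : ℕ) : ∀ᶠ n in atTop, n ^ k ≤ pA A n := by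
  obtain ⟨B, hBA, N, hB⟩ := exists_finset_forall_ge_mem_span hgcd
  obtain ⟨S, hSA, hS⟩ := (hA.sdiff B.finite_toSet).exists_subset_card_eq (2 * k)
  filter_upwards [eventually_ge_atTop ((N + ∑ s ∈ S, s + 1) ^ 2)] with n hn
  have hsqrt : N + ∑ s ∈ S, s + 1 ≤ n.sqrt := Nat.le_sqrt'.2 hn
  have hroom : N + n.sqrt * ∑ s ∈ S, s ≤ n :=
    calc N + n.sqrt * ∑ s ∈ S, s ≤ n.sqrt * n.sqrt := by
          nlinarith [Nat.mul_le_mul_left n.sqrt hsqrt,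
            Nat.le_mul_of_pos_left N (by omega : 0 < n.sqrt)]
      _ ≤ n := Nat.sqrt_le n
  calc n ^ k ≤ ((n.sqrt + 1) ^ 2) ^ k := Nat.pow_le_pow_left (Nat.lt_succ_sqrt' n).le k
    _ = (n.sqrt + 1) ^ S.card := by rw [hS, ← pow_mul]
    _ ≤ pA A n := pow_card_le_pA hpos hBA hSA hB hroom

theorem stmt2 (A : Set ℕ) (hA : A.Infinite) (hpos : ∀ a ∈ A, 0 < a)
    (hgcd : ∀ d : ℕ, (∀ a ∈ A, d ∣ a) → d = 1) :
    Tendsto (fun n : ℕ => Real.log (pA A n) / Real.log n) atTop atTop := by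
  have hgcd' : Nat.setGcd A = 1 := hgcd _ fun _ => Nat.setGcd_dvd_of_mem
  refine tendsto_atTop.2 fun C => ?_
  filter_upwards [eventually_pow_le_pA hA hpos hgcd' ⌈C⌉₊, eventually_ge_atTop 2]
    with n hpow hn
  have hn' : (1 : ℝ) < n := by exact_mod_cast hn
  rw [le_div_iff₀ (Real.log_pos hn')]
  calc C * Real.log n ≤ ⌈C⌉₊ * Real.log n :=
        mul_le_mul_of_nonneg_right (Nat.le_ceil C) (Real.log_pos hn').le
    _ = Real.log ((n ^ ⌈C⌉₊ : ℕ) : ℝ) := by rw [Nat.cast_pow, Real.log_pow]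
    _ ≤ Real.log (pA A n) :=
        Real.log_le_log (by positivity) (by exact_mod_cast hpow)
end

section
/- Let $(n_k)_{k \geq 1}$ be a sequence of positive integers with $n_1 = 1$ and $n_{k+1} > 2 n_k^k$ for all $k \geq 1$, and define $f(n) = n_k^k + (n - n_k)$ for $n_k \leq n < n_{k+1}$. Then $\limsup_{n \to \infty} \frac{\log f(n)}{\log n} = \infty$. -/
open Filter

open Topology

/-!
At the left endpoint `m = n k` of the `k`-th block, `f (n k) = (n k) ^ k`, so the ratio
`log f(m) / log m` equals `k` along the subsequence `m = n k`, which tends to infinity.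
-/

theorem Real.log_pow_div_log_self {a : ℝ} (ha : 1 < a) (k : ℕ) :
    Real.log (a ^ k) / Real.log a = k := by
  rw [Real.log_pow, mul_div_cancel_right₀ _ (Real.log_pos ha).ne']

theorem limsup_eq_top_of_tendsto_comp {α β : Type*} {l : Filter α} [l.NeBot] {g : Filter β}
    {u : β → EReal} {φ : α → β} (hφ : Tendsto φ l g) (hu : Tendsto (u ∘ φ) l (𝓝 ⊤)) :
    limsup u g = ⊤ :=
  top_unique (hu.limsup_eq.symm.le.trans hφ.limsup_comp_le_limsup)

theorem lt_succ_of_two_mul_pow_lt {n : ℕ → ℕ} (hgrow : ∀ k ≥ 1, 2 * n k ^ k < n (k + 1))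
    {k : ℕ} (hk : 1 ≤ k) : n k < n (k + 1) :=
  calc n k ≤ n k ^ k := Nat.le_self_pow (by omega) _
    _ ≤ 2 * n k ^ k := Nat.le_mul_of_pos_left _ two_pos
    _ < n (k + 1) := hgrow k hk

theorem le_succ_of_two_mul_pow_lt {n : ℕ → ℕ} (hgrow : ∀ k ≥ 1, 2 * n k ^ k < n (k + 1))
    (k : ℕ) : k ≤ n (k + 1) := by
  induction k with
  | zero => exact Nat.zero_le _
  | succ k ih => exact ih.trans_lt (lt_succ_of_two_mul_pow_lt hgrow (by omega))

theorem tendsto_atTop_of_two_mul_pow_lt {n : ℕ → ℕ} (hgrow : ∀ k ≥ 1, 2 * n k ^ k < n (k + 1)) :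
    Tendsto n atTop atTop :=
  (tendsto_add_atTop_iff_nat 1).mp <|
    tendsto_atTop_mono (le_succ_of_two_mul_pow_lt hgrow) tendsto_id

theorem stmt5_general (n : ℕ → ℕ)
    (hgrow : ∀ k ≥ 1, 2 * n k ^ k < n (k + 1))
    (f : ℕ → ℕ)
    (hf : ∀ k ≥ 1, ∀ m : ℕ, n k ≤ m → m < n (k + 1) → f m = n k ^ k + (m - n k)) :
    limsup (fun m : ℕ => ((Real.log (f m) / Real.log m : ℝ) : EReal)) atTop = ⊤ := by
  have ratio_at_left_endpoint : ∀ k ≥ 3,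
      ((Real.log (f (n k)) / Real.log (n k) : ℝ) : EReal) = (k : ℝ) := by
    intro k hk
    have hfk : f (n k) = n k ^ k := by
      simpa using hf k (by omega) (n k) le_rfl (lt_succ_of_two_mul_pow_lt hgrow (by omega))
    have hnk : (1 : ℝ) < n k := by
      have := le_succ_of_two_mul_pow_lt hgrow (k - 1)
      rw [Nat.sub_add_cancel (by omega)] at this
      exact_mod_cast (by omega : 1 < n k)
    rw [hfk, Nat.cast_pow, Real.log_pow_div_log_self hnk]
  refine limsup_eq_top_of_tendsto_comp (tendsto_atTop_of_two_mul_pow_lt hgrow) ?_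
  exact (EReal.tendsto_coe_atTop.comp tendsto_natCast_atTop_atTop).congr'
    ((eventually_ge_atTop 3).mono fun k hk => (ratio_at_left_endpoint k hk).symm)

theorem stmt5 (n : ℕ → ℕ) (hn1 : n 1 = 1) (hpos : ∀ k ≥ 1, 0 < n k)
    (hgrow : ∀ k ≥ 1, 2 * n k ^ k < n (k + 1))
    (f : ℕ → ℕ)
    (hf : ∀ k ≥ 1, ∀ m : ℕ, n k ≤ m → m < n (k + 1) → f m = n k ^ k + (m - n k)) :
    limsup (fun m : ℕ => ((Real.log (f m) / Real.log m : ℝ) : EReal)) atTop = ⊤ :=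
  stmt5_general n hgrow f hf
end

section
/- Let $(n_k)_{k \geq 1}$ be a sequence of positive integers with $n_1 = 1$ and $n_{k+1} > 2 n_k^k$ for all $k \geq 1$, and define $f(n) = n_k^k + (n - n_k)$ for $n_k \leq n < n_{k+1}$. Then $\liminf_{n \to \infty} \frac{\log f(n)}{\log n} = 1$. -/
open Filter

theorem stmt6 (n : ℕ → ℕ) (hn1 : n 1 = 1) (hpos : ∀ k ≥ 1, 0 < n k)
    (hgrow : ∀ k ≥ 1, 2 * n k ^ k < n (k + 1))
    (f : ℕ → ℕ)
    (hf : ∀ k ≥ 1, ∀ m : ℕ, n k ≤ m → m < n (k + 1) → f m = n k ^ k + (m - n k)) :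
    liminf (fun m : ℕ => Real.log (f m) / Real.log m) atTop = 1 := by
  set g : ℕ → ℝ := fun m => Real.log (f m) / Real.log m with hg
  -- n k ≤ n k ^ k for k ≥ 1
  have hself : ∀ k ≥ 1, n k ≤ n k ^ k := fun k hk =>
    Nat.le_self_pow (by omega) _
  have hmono : ∀ k ≥ 1, n k < n (k + 1) := by
    intro k hk
    have := hgrow k hk
    have := hself k hk
    omega
  -- n k ≥ k for k ≥ 1
  have hnk : ∀ k, 1 ≤ k → k ≤ n k := by
    intro k
    induction k with
    | zero => omega
    | succ k ih =>
      intro _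
      rcases Nat.eq_or_lt_of_le (Nat.one_le_iff_ne_zero.mpr (Nat.succ_ne_zero k)) with h | h
      · have hk0 : k = 0 := by omega
        subst hk0
        simp [hn1]
      · have hk1 : 1 ≤ k := by omega
        have := ih hk1
        have := hmono k hk1
        omega
  -- every m ≥ 1 lies in some interval [n k, n (k+1))
  have hint : ∀ m : ℕ, 1 ≤ m → ∃ k, 1 ≤ k ∧ n k ≤ m ∧ m < n (k + 1) := by
    intro m
    induction m with
    | zero => omega
    | succ m ih =>
      intro _
      by_cases hm : 1 ≤ m
      · obtain ⟨k, hk1, hk2, hk3⟩ := ih hm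
        by_cases h : m + 1 < n (k + 1)
        · exact ⟨k, hk1, by omega, h⟩
        · refine ⟨k + 1, by omega, by omega, ?_⟩
          have := hmono (k + 1) (by omega)
          omega
      · have hm0 : m = 0 := by omega
        refine ⟨1, le_refl 1, by omega, ?_⟩
        have := hmono 1 (le_refl 1)
        omega
  -- lower bound: f m ≥ m
  have hge : ∀ m : ℕ, 1 ≤ m → m ≤ f m := by
    intro m hm
    obtain ⟨k, hk1, hk2, hk3⟩ := hint m hm
    rw [hf k hk1 m hk2 hk3]
    have := hself k hk1
    omega
  have hlow : ∀ m : ℕ, 2 ≤ m → 1 ≤ g m := by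
    intro m hm
    have hlogm : 0 < Real.log m := by
      apply Real.log_pos
      exact_mod_cast (by omega : (1:ℕ) < m)
    rw [hg, le_div_iff₀ hlogm, one_mul]
    apply Real.log_le_log (by positivity)
    exact_mod_cast hge m (by omega)
  have hev : ∀ᶠ m in atTop, 1 ≤ g m := eventually_atTop.mpr ⟨2, hlow⟩
  have hbdd : IsBoundedUnder (· ≥ ·) atTop g := ⟨1, hev⟩
  -- the subsequence m = n (k+1) - 1 : g m ≤ 1 + log 2 / log m
  have hsub : ∀ k : ℕ, 2 ≤ k → g (n (k + 1) - 1) ≤ 1 + Real.log 2 / Real.log ((n (k + 1) - 1 : ℕ) : ℝ) := by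
    intro k hk
    set m := n (k + 1) - 1 with hm
    have hk1 : 1 ≤ k := by omega
    have hmono' := hmono k hk1
    have hgrow' := hgrow k hk1
    have hnk' := hnk (k + 1) (by omega)
    have hm2 : 2 ≤ m := by omega
    have hfm : f m = n k ^ k + (m - n k) := hf k hk1 m (by omega) (by omega)
    have hfle : f m ≤ 2 * m := by
      have hp := hself k hk1
      have hp2 : 2 * n k ^ k ≤ m := by omega
      omega
    have hlogm : 0 < Real.log m := by
      apply Real.log_pos
      exact_mod_cast (by omega : (1:ℕ) < m)
    have hfpos : 0 < (f m : ℝ) := by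
      have := hge m (by omega)
      exact_mod_cast (by omega : 0 < f m)
    have h1 : Real.log (f m) ≤ Real.log 2 + Real.log m := by
      rw [← Real.log_mul (by norm_num) (by positivity)]
      apply Real.log_le_log hfpos
      exact_mod_cast hfle
    rw [hg]
    calc Real.log (f m) / Real.log m ≤ (Real.log 2 + Real.log m) / Real.log m := by
          gcongr
      _ = 1 + Real.log 2 / Real.log m := by field_simp; ring
  -- liminf ≥ 1
  have h1le : (1 : ℝ) ≤ liminf g atTop := by
    apply le_liminf_of_le
    · apply IsCoboundedUnder.of_frequently_le (a := 2)
      rw [frequently_atTop]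
      intro N
      set k := max N 2 with hkdef
      have hk2 : 2 ≤ k := le_max_right _ _
      have hnk' := hnk (k + 1) (by omega)
      refine ⟨n (k + 1) - 1, by omega, ?_⟩
      have := hsub k hk2
      have hlogm : Real.log 2 ≤ Real.log ((n (k + 1) - 1 : ℕ) : ℝ) := by
        apply Real.log_le_log (by norm_num)
        exact_mod_cast (by omega : 2 ≤ n (k + 1) - 1)
      have hlog2 : (0:ℝ) < Real.log 2 := Real.log_pos (by norm_num)
      have : Real.log 2 / Real.log (↑(n (k + 1) - 1)) ≤ 1 := by
        rw [div_le_one (by linarith)]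
        exact hlogm
      linarith [hsub k hk2]
    · exact hev
  -- liminf ≤ 1
  have hle1 : liminf g atTop ≤ 1 := by
    apply le_of_forall_pos_le_add
    intro ε hε
    apply liminf_le_of_frequently_le _ hbdd
    -- log 2 / log k → 0
    have h0 : Tendsto (fun k : ℕ => Real.log 2 / Real.log k) atTop (nhds 0) :=
      (tendsto_const_nhds.div_atTop
        (Real.tendsto_log_atTop.comp tendsto_natCast_atTop_atTop))
    have hev0 : ∀ᶠ k : ℕ in atTop, Real.log 2 / Real.log k ≤ ε := by
      filter_upwards [h0.eventually (ge_mem_nhds hε)] with k hk using hk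
    obtain ⟨K, hK⟩ := eventually_atTop.mp hev0
    rw [frequently_atTop]
    intro N
    set k := max (max N K) 2 with hkdef
    have hk2 : 2 ≤ k := le_max_right _ _
    have hkN : N ≤ k := le_trans (le_max_left _ _) (le_max_left _ _)
    have hkK : K ≤ k := le_trans (le_max_right _ _) (le_max_left _ _)
    have hnk' := hnk (k + 1) (by omega)
    set m := n (k + 1) - 1 with hm
    have hmk : k ≤ m := by omega
    refine ⟨m, by omega, ?_⟩
    have hlogk : 0 < Real.log k := Real.log_pos (by exact_mod_cast (by omega : (1:ℕ) < k))
    have hlogm : Real.log k ≤ Real.log m := by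
      apply Real.log_le_log (by exact_mod_cast (by omega : 0 < k))
      exact_mod_cast hmk
    have hdiv : Real.log 2 / Real.log m ≤ Real.log 2 / Real.log k := by
      apply div_le_div_of_nonneg_left (Real.log_nonneg (by norm_num)) hlogk hlogm
    have := hK k hkK
    have := hsub k hk2
    linarith
  linarith
end

section
/- There exists a strictly increasing arithmetic function $f : \mathbb{N} \to \mathbb{N}$ such that $\limsup_{n \to \infty} \frac{\log f(n)}{\log n} = \infty$ and $\liminf_{n \to \infty} \frac{\log f(n)}{\log n} = 1$. -/
open Filter

/-!
Take thresholds `N k = 2 ^ (k + 1)!` and let `f n = n + N k ^ (k + 1)` on `N k ≤ n < N (k + 1)`.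
Then `f` is strictly increasing and `n ≤ f n`, so `log f n / log n` is eventually at least `1`.
At `n = N k` the ratio is at least `k + 1`, giving `limsup = ∞`. Because
`N k ^ (k + 1) ≤ N (k + 1)`, just below the next threshold we have `f n ≤ 3 n`, so the ratio is
at most `1 + log 3 / log n` there, giving `liminf = 1`.
-/

open Real

lemma natCast_le_log_div_log {n m k : ℕ} (hn : 2 ≤ n) (h : n ^ k ≤ m) :
    (k : ℝ) ≤ log m / log n := by
  have hn' : (0 : ℝ) < n := by positivity
  rw [le_div_iff₀ (log_pos (by exact_mod_cast hn)), ← log_pow]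
  exact log_le_log (pow_pos hn' k) (by exact_mod_cast h)

lemma log_div_log_le_one_add {n m C : ℕ} (hn : 2 ≤ n) (hm : 0 < m) (h : m ≤ C * n) :
    log m / log n ≤ 1 + log C / log n := by
  have hC : 0 < C := Nat.pos_of_mul_pos_right (hm.trans_le h)
  have hlog : 0 < log n := log_pos (by exact_mod_cast hn)
  have hlog_m : log m ≤ log C + log n := by
    rw [← log_mul (by positivity) (by positivity)]
    exact log_le_log (by positivity) (by exact_mod_cast h)
  rw [div_le_iff₀ hlog, add_mul, one_mul, div_mul_cancel₀ _ hlog.ne']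
  linarith

theorem EReal.limsup_coe_eq_top_of_frequently_natCast_le {ι : Type*} {l : Filter ι}
    {u : ι → ℝ} (h : ∀ k : ℕ, ∃ᶠ i in l, (k : ℝ) ≤ u i) :
    limsup (fun i => (u i : EReal)) l = ⊤ := by
  refine (EReal.eq_top_iff_forall_lt _).2 fun y => ?_
  obtain ⟨k, hk⟩ := exists_nat_gt y
  exact (EReal.coe_lt_coe_iff.2 hk).trans_le <|
    le_limsup_of_frequently_le' <| (h k).mono fun i hi => EReal.coe_le_coe_iff.2 hi

theorem limsup_log_div_log_eq_top {f : ℕ → ℕ} (h : ∀ k, ∃ᶠ n in atTop, n ^ k ≤ f n) :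
    limsup (fun n : ℕ => ((log (f n) / log n : ℝ) : EReal)) atTop = ⊤ :=
  EReal.limsup_coe_eq_top_of_frequently_natCast_le fun k =>
    ((h k).and_eventually (eventually_ge_atTop 2)).mono fun _ ⟨hpow, hn⟩ =>
      natCast_le_log_div_log hn hpow

theorem liminf_log_div_log_eq_one {f : ℕ → ℕ} (hf : ∀ n, n ≤ f n) {C : ℕ}
    (hC : ∃ᶠ n in atTop, f n ≤ C * n) :
    liminf (fun n : ℕ => log (f n) / log n) atTop = 1 := by
  have one_le : ∀ᶠ n : ℕ in atTop, 1 ≤ log (f n) / log n := by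
    filter_upwards [eventually_ge_atTop 2] with n hn
    exact_mod_cast natCast_le_log_div_log (k := 1) hn (by simpa using hf n)
  have le_one_add : ∀ ε > 0, ∃ᶠ n : ℕ in atTop, log (f n) / log n ≤ 1 + ε := by
    intro ε hε
    have small : ∀ᶠ n : ℕ in atTop, log C / log n ≤ ε :=
      ((tendsto_const_nhds (x := log C)).div_atTop
        (tendsto_log_atTop.comp tendsto_natCast_atTop_atTop)).eventually (ge_mem_nhds hε)
    refine (hC.and_eventually (small.and (eventually_ge_atTop 2))).mono ?_
    rintro n ⟨hfn, hsmall, hn⟩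
    linarith [log_div_log_le_one_add hn (by linarith [hf n]) hfn]
  refine le_antisymm ?_ (le_liminf_of_le (IsCoboundedUnder.of_frequently_le
    (le_one_add 1 one_pos)) one_le)
  exact le_of_forall_pos_le_add fun ε hε =>
    liminf_le_of_frequently_le (le_one_add ε hε) (isBoundedUnder_of_eventually_ge one_le)

def threshold (k : ℕ) : ℕ := 2 ^ (k + 1).factorial

def level (n : ℕ) : ℕ := Nat.findGreatest (fun k => threshold k ≤ n) n

def height (k : ℕ) : ℕ := threshold k ^ (k + 1)

def staircase (n : ℕ) : ℕ := n + height (level n)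

lemma threshold_strictMono : StrictMono threshold := fun _ _ h =>
  Nat.pow_lt_pow_right (by norm_num) ((Nat.factorial_lt (by omega)).2 (by omega))

lemma lt_threshold (k : ℕ) : k < threshold k :=
  (Nat.lt_succ_self k).trans <|
    Nat.lt_two_pow_self.trans_le (Nat.pow_le_pow_right (by norm_num) (Nat.self_le_factorial _))

lemma height_mono : Monotone height := fun _ _ h =>
  (Nat.pow_le_pow_left (threshold_strictMono.monotone h) _).trans
    (Nat.pow_le_pow_right (by unfold threshold; positivity) (by omega))

lemma height_le_threshold_succ (k : ℕ) : height k ≤ threshold (k + 1) := by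
  rw [height, threshold, threshold, ← pow_mul, Nat.factorial_succ (k + 1)]
  exact Nat.pow_le_pow_right (by norm_num) (by nlinarith)

lemma level_mono : Monotone level := fun _ _ h =>
  Nat.findGreatest_mono (fun _ hk => hk.trans h) h

lemma le_level_threshold (k : ℕ) : k ≤ level (threshold k) :=
  Nat.le_findGreatest (lt_threshold k).le le_rfl

lemma level_le_of_lt_threshold {n k : ℕ} (h : n < threshold (k + 1)) : level n ≤ k := by
  by_contra! hk
  have h_level : threshold (level n) ≤ n :=
    Nat.findGreatest_of_ne_zero (P := fun k => threshold k ≤ n) rfl (by omega)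
  have h_mono := threshold_strictMono.monotone (show k + 1 ≤ level n from hk)
  omega

lemma staircase_strictMono : StrictMono staircase :=
  strictMono_id.add_monotone (height_mono.comp level_mono)

lemma self_le_staircase (n : ℕ) : n ≤ staircase n := Nat.le_add_right _ _

lemma frequently_pow_le_staircase (k : ℕ) : ∃ᶠ n in atTop, n ^ k ≤ staircase n := by
  refine frequently_atTop.2 fun b => ⟨threshold (max b k), ?_, ?_⟩
  · exact (le_max_left b k).trans (lt_threshold _).le
  · calc threshold (max b k) ^ k ≤ height (max b k) :=
          Nat.pow_le_pow_right (by unfold threshold; positivity) (by omega)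
      _ ≤ height (level (threshold (max b k))) := height_mono (le_level_threshold _)
      _ ≤ staircase (threshold (max b k)) := Nat.le_add_left _ _

lemma frequently_staircase_le_three_mul : ∃ᶠ n in atTop, staircase n ≤ 3 * n := by
  refine frequently_atTop.2 fun b => ?_
  have h_lt := lt_threshold (b + 1)
  have h_height : height (level (threshold (b + 1) - 1)) ≤ threshold (b + 1) :=
    (height_mono (level_le_of_lt_threshold (by omega))).trans (height_le_threshold_succ b)
  exact ⟨threshold (b + 1) - 1, by omega, by unfold staircase; omega⟩

theorem stmt7 :
    ∃ f : ℕ → ℕ, StrictMonoOn f (Set.Ici 1) ∧ (∀ m ≥ 1, 0 < f m) ∧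
      limsup (fun m : ℕ => ((Real.log (f m) / Real.log m : ℝ) : EReal)) atTop = ⊤ ∧
      liminf (fun m : ℕ => Real.log (f m) / Real.log m) atTop = 1 :=
  ⟨staircase, staircase_strictMono.strictMonoOn _,
    fun m hm => lt_of_lt_of_le hm (self_le_staircase m),
    limsup_log_div_log_eq_top frequently_pow_le_staircase,
    liminf_log_div_log_eq_one self_le_staircase frequently_staircase_le_three_mul⟩
end

section
/- Let $a \geq 2$ be an integer, $A = \{a^i : i \geq 0\}$, and let $M$ be a set of positive integers such that no element of $M$ is divisible by $a$. Then for every $r \geq 0$, the only partition of $a^r$ with parts in $A$ and multiplicities in $M \cup \{1\}$ is $a^r = 1 \cdot a^r$, i.e., $p_{A, M \cup \{1\}}(a^r) = 1$. -/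
open Filter

lemma key_unique_repr (a : ℕ) (ha : 2 ≤ a) :
    ∀ r : ℕ, ∀ f : ℕ →₀ ℕ,
      (∀ x ∈ f.support, ∃ i, x = a ^ i) →
      (∀ x ∈ f.support, ¬ a ∣ f x) →
      f.sum (fun x m => m * x) = a ^ r →
      f = Finsupp.single (a ^ r) 1 := by
  intro r
  induction r with
  | zero =>
    intro f hA hM hsum
    simp only [pow_zero] at *
    have hsup : ∀ y ∈ f.support, y = 1 ∧ f y = 1 := by
      intro y hy
      have h1 : f y * y ≤ 1 := by
        rw [← hsum]
        exact Finset.single_le_sum (f := fun x => f x * x) (fun x _ => Nat.zero_le _) hy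
      have hy0 : f y ≠ 0 := Finsupp.mem_support_iff.mp hy
      obtain ⟨i, hi⟩ := hA y hy
      have hypos : 0 < y := by rw [hi]; positivity
      have : f y * y = 1 :=
        le_antisymm h1 (Nat.one_le_iff_ne_zero.mpr (Nat.mul_ne_zero hy0 hypos.ne'))
      obtain ⟨h2, h3⟩ := mul_eq_one.mp this
      exact ⟨h3, h2⟩
    rw [Finsupp.eq_single_iff]
    constructor
    · intro y hy; simpa using (hsup y hy).1
    · by_cases h : 1 ∈ f.support
      · exact (hsup 1 h).2
      · exfalso
        rw [Finsupp.sum] at hsum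
        have : ∀ y ∈ f.support, f y * y = 0 := by
          intro y hy
          rcases hsup y hy with ⟨h1, h2⟩
          exact absurd (h1 ▸ hy) h
        rw [Finset.sum_eq_zero this] at hsum
        exact one_ne_zero hsum.symm
  | succ r ih =>
    intro f hA hM hsum
    have ha0 : 0 < a := by omega
    -- 1 is not in the support
    have h1 : f 1 = 0 := by
      by_contra h1
      have hmem : 1 ∈ f.support := Finsupp.mem_support_iff.mpr h1
      have hdvd : a ∣ f 1 := by
        have hrest : a ∣ f.sum (fun x m => m * x) - f 1 * 1 := by
          rw [Finsupp.sum, ← Finset.sum_erase_add _ _ hmem]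
          simp only [Nat.add_sub_cancel]
          apply Finset.dvd_sum
          intro x hx
          have hx' := Finset.mem_of_mem_erase hx
          obtain ⟨i, hi⟩ := hA x hx'
          have hx1 : x ≠ 1 := Finset.ne_of_mem_erase hx
          have hi0 : i ≠ 0 := by rintro rfl; simp at hi; exact hx1 hi
          exact Dvd.dvd.mul_left (hi ▸ dvd_pow_self a hi0) _
        have hsub : f.sum (fun x m => m * x) - (f.sum (fun x m => m * x) - f 1 * 1) = f 1 * 1 := by
          apply Nat.sub_sub_self
          rw [Finsupp.sum]
          exact Finset.single_le_sum (f := fun x => f x * x) (fun x _ => Nat.zero_le _) hmem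
        have hd2 : a ∣ f.sum (fun x m => m * x) := by
          rw [hsum]; exact dvd_pow_self a (Nat.succ_ne_zero r)
        have hfin := Nat.dvd_sub hd2 hrest
        rw [hsub, mul_one] at hfin
        exact hfin
      exact hM 1 hmem hdvd
    have hdvdsup : ∀ y ∈ f.support, a ∣ y := by
      intro y hy
      obtain ⟨i, hi⟩ := hA y hy
      have hi0 : i ≠ 0 := by
        rintro rfl
        simp only [pow_zero] at hi
        exact Finsupp.mem_support_iff.mp hy (hi ▸ h1)
      exact hi ▸ dvd_pow_self a hi0
    have hinj : Function.Injective (fun x : ℕ => a * x) := fun x y h => by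
      exact Nat.eq_of_mul_eq_mul_left ha0 h
    have hbij : Set.BijOn (fun x : ℕ => a * x) ((fun x : ℕ => a * x) ⁻¹' ↑f.support)
        ↑f.support := by
      refine ⟨fun x hx => hx, hinj.injOn, ?_⟩
      intro y hy
      obtain ⟨c, hc⟩ := hdvdsup y hy
      exact ⟨c, by simpa [← hc] using hy, hc.symm⟩
    set g := Finsupp.comapDomain (fun x : ℕ => a * x) f hinj.injOn with hg
    have hgapp : ∀ x, g x = f (a * x) := fun x => rfl
    have hgsupp : ∀ x, x ∈ g.support ↔ a * x ∈ f.support := by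
      intro x
      rw [Finsupp.mem_support_iff, Finsupp.mem_support_iff, hgapp]
    have hgsum : g.sum (fun x m => m * x) = a ^ r := by
      have h2 := Finsupp.sum_comapDomain (fun x : ℕ => a * x) f (fun x m => m * x) hbij
      rw [hsum] at h2
      have h3 : g.sum ((fun (x : ℕ) (m : ℕ) => m * x) ∘ (fun x : ℕ => a * x)) =
          a * g.sum (fun x m => m * x) := by
        rw [Finsupp.sum, Finsupp.sum, Finset.mul_sum]
        apply Finset.sum_congr rfl
        intro x _
        simp [Function.comp]; ring
      rw [h3] at h2
      have h4 : a * g.sum (fun x m => m * x) = a * a ^ r := by rw [h2, pow_succ]; ring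
      exact Nat.eq_of_mul_eq_mul_left ha0 h4
    have hgA : ∀ x ∈ g.support, ∃ i, x = a ^ i := by
      intro x hx
      have hx' := (hgsupp x).mp hx
      obtain ⟨i, hi⟩ := hA _ hx'
      have hi0 : i ≠ 0 := by
        rintro rfl
        simp only [pow_zero] at hi
        have hd := hdvdsup _ hx'
        rw [hi] at hd
        exact Nat.lt_irrefl 1 (lt_of_lt_of_le (by omega) (Nat.le_of_dvd one_pos hd))
      refine ⟨i - 1, ?_⟩
      have heq : a * x = a * a ^ (i - 1) := by
        rw [hi, ← pow_succ']
        congr 1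
        omega
      exact Nat.eq_of_mul_eq_mul_left ha0 heq
    have hgM : ∀ x ∈ g.support, ¬ a ∣ g x := by
      intro x hx
      exact hM _ ((hgsupp x).mp hx)
    have hgsingle := ih g hgA hgM hgsum
    rw [Finsupp.eq_single_iff]
    constructor
    · intro y hy
      obtain ⟨c, hc⟩ := hdvdsup y hy
      have hcmem : c ∈ g.support := (hgsupp c).mpr (hc ▸ hy)
      rw [hgsingle] at hcmem
      have hceq : c = a ^ r := by
        simpa using Finsupp.support_single_subset hcmem
      simp only [Finset.mem_singleton]
      rw [hc, hceq, pow_succ]; ring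
    · have happ : f (a * a ^ r) = g (a ^ r) := rfl
      rw [show a ^ (r + 1) = a * a ^ r by rw [pow_succ]; ring, happ, hgsingle,
        Finsupp.single_eq_same]

theorem stmt9 (a : ℕ) (ha : 2 ≤ a) (M : Set ℕ) (hMpos : ∀ m ∈ M, 0 < m)
    (hMnd : ∀ m ∈ M, ¬ a ∣ m) :
    ∀ r : ℕ, pAM {x : ℕ | ∃ i : ℕ, x = a ^ i} (M ∪ {1}) (a ^ r) = 1 := by
  intro r
  have hnd : ∀ m ∈ M ∪ ({1} : Set ℕ), ¬ a ∣ m := by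
    rintro m (hm | hm)
    · exact hMnd m hm
    · simp only [Set.mem_singleton_iff] at hm
      subst hm
      intro hd
      have := Nat.le_of_dvd one_pos hd
      omega
  rw [pAM, Nat.card_eq_one_iff_unique]
  constructor
  · constructor
    rintro ⟨f, hfA, hfM, hfsum⟩ ⟨g, hgA, hgM, hgsum⟩
    have hf := key_unique_repr a ha r f hfA (fun x hx => hnd _ (hfM x hx)) hfsum
    have hg := key_unique_repr a ha r g hgA (fun x hx => hnd _ (hgM x hx)) hgsum
    exact Subtype.ext (hf.trans hg.symm)
  · refine ⟨⟨Finsupp.single (a ^ r) 1, ?_, ?_, ?_⟩⟩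
    · intro x hx
      have hx' : x = a ^ r := by
        simpa using Finsupp.support_single_subset hx
      exact ⟨r, hx'⟩
    · intro x hx
      have hx' : x = a ^ r := by
        simpa using Finsupp.support_single_subset hx
      subst hx'
      right
      simp
    · rw [Finsupp.sum_single_index (by simp)]
      simp
end

section
/- Let $a \geq 2$ be an integer, $A = \{a^i : i \geq 0\}$, and let $M$ be an infinite set of positive integers containing $\{1, \ldots, a-1\}$ with no element divisible by $a$. Then $\liminf_{n \to \infty} \frac{\log p_{A,M}(n)}{\log n} = 0$; in particular $p_{A,M}$ does not have superpolynomial growth. -/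
open Filter

/-
If `n = a ^ k = ∑ m_x x` with parts `x` powers of `a` and no `m_x` divisible by `a`,
let `a ^ j` be the smallest part. Every other part is divisible by `a ^ (j + 1)` while
`m_{a^j} a ^ j` is not, so `a ^ (j + 1) ∤ a ^ k`, i.e. `k ≤ j`; also `a ^ j ≤ a ^ k`. Hence the
smallest part is `a ^ k` itself, and the only representation is `a ^ k = 1 · a ^ k`.
So `p_{A,M}(a ^ k) = 1`, and the ratio `log p_{A,M}(n) / log n ≥ 0` vanishes along `n = a ^ k`.
-/

namespace IsRepr

variable {A M : Set ℕ} {n : ℕ} {f : ℕ →₀ ℕ}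

theorem sum_eq_add_sum_erase (hf : IsRepr A M n f) {x : ℕ} (hx : x ∈ f.support) :
    f x * x + ∑ y ∈ f.support.erase x, f y * y = n :=
  (Finset.add_sum_erase _ (fun y => f y * y) hx).trans hf.2.2

theorem le_of_mem_support (hf : IsRepr A M n f) {x : ℕ} (hx : x ∈ f.support) : x ≤ n :=
  calc x ≤ f x * x :=
        Nat.le_mul_of_pos_left x (Nat.pos_of_ne_zero (Finsupp.mem_support_iff.mp hx))
    _ ≤ n := (Nat.le_add_right _ _).trans (hf.sum_eq_add_sum_erase hx).le

theorem eq_single_of_mem_support (hA : 0 ∉ A) (hf : IsRepr A M n f) (hn : n ∈ f.support) :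
    f = Finsupp.single n 1 := by
  have hpos : ∀ y ∈ f.support, 0 < f y * y := fun y hy =>
    Nat.mul_pos (Nat.pos_of_ne_zero (Finsupp.mem_support_iff.mp hy))
      (Nat.pos_of_ne_zero fun h => hA (h ▸ hf.1 y hy))
  have hsplit := hf.sum_eq_add_sum_erase hn
  have hn_le : n ≤ f n * n :=
    Nat.le_mul_of_pos_left n (Nat.pos_of_ne_zero (Finsupp.mem_support_iff.mp hn))
  have hrest : ∑ y ∈ f.support.erase n, f y * y = 0 := by omega
  refine Finsupp.eq_single_iff.mpr ⟨fun y hy => ?_, ?_⟩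
  · by_contra hyn
    have := Finset.single_le_sum (f := fun y => f y * y) (fun _ _ => Nat.zero_le _)
      (Finset.mem_erase.mpr ⟨Finset.notMem_singleton.mp hyn, hy⟩)
    have := hpos y hy
    omega
  · exact Nat.eq_of_mul_eq_mul_right (Nat.pos_of_mul_pos_left (hpos n hn)) (by omega)

end IsRepr

theorem isRepr_single {A M : Set ℕ} {x m : ℕ} (hx : x ∈ A) (hm : m ∈ M) :
    IsRepr A M (m * x) (Finsupp.single x m) := by
  refine ⟨fun y hy => ?_, fun y hy => ?_, Finsupp.sum_single_index (zero_mul x)⟩ <;>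
    obtain rfl := Finset.mem_singleton.mp (Finsupp.support_single_subset hy)
  · exact hx
  · simpa using hm

section PowersOf

variable {a : ℕ} {M : Set ℕ} {n : ℕ} {f : ℕ →₀ ℕ}

theorem not_pow_succ_dvd_of_isRepr (ha : 1 < a) (hMnd : ∀ m ∈ M, ¬ a ∣ m)
    (hf : IsRepr {x : ℕ | ∃ i : ℕ, x = a ^ i} M n f) {j : ℕ} (hj : a ^ j ∈ f.support)
    (hmin : ∀ x ∈ f.support, a ^ j ≤ x) : ¬ a ^ (j + 1) ∣ n := by
  intro hdvd
  have hrest : a ^ (j + 1) ∣ ∑ x ∈ f.support.erase (a ^ j), f x * x :=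
    Finset.dvd_sum fun x hx => by
      obtain ⟨hxj, hxs⟩ := Finset.mem_erase.mp hx
      obtain ⟨i, rfl⟩ := hf.1 x hxs
      have hji : j < i := (Nat.pow_lt_pow_iff_right ha).mp ((hmin _ hxs).lt_of_ne' hxj)
      exact (Nat.pow_dvd_pow a hji).mul_left _
  rw [← hf.sum_eq_add_sum_erase hj, add_comm (f _ * _), Nat.dvd_add_right hrest, pow_succ,
    mul_comm (f _)] at hdvd
  exact hMnd _ (hf.2.1 _ hj) (Nat.dvd_of_mul_dvd_mul_left (by positivity) hdvd)

theorem eq_single_of_isRepr_pow (ha : 1 < a) (hMnd : ∀ m ∈ M, ¬ a ∣ m) {k : ℕ}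
    (hf : IsRepr {x : ℕ | ∃ i : ℕ, x = a ^ i} M (a ^ k) f) :
    f = Finsupp.single (a ^ k) 1 := by
  have hne : f.support.Nonempty := by
    refine Finsupp.support_nonempty_iff.mpr fun hf0 => ?_
    have hsum := hf.2.2
    simp only [hf0, Finsupp.sum_zero_index] at hsum
    exact pow_ne_zero k (by omega) hsum.symm
  have hmin := f.support.min'_mem hne
  obtain ⟨j, hj⟩ := hf.1 _ hmin
  rw [hj] at hmin
  have hjk : j ≤ k := (Nat.pow_le_pow_iff_right ha).mp (hf.le_of_mem_support hmin)
  have hkj : k ≤ j := by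
    by_contra! hjk'
    exact not_pow_succ_dvd_of_isRepr ha hMnd hf hmin (hj ▸ f.support.min'_le)
      (Nat.pow_dvd_pow a hjk')
  rw [le_antisymm hjk hkj] at hmin
  refine hf.eq_single_of_mem_support ?_ hmin
  rintro ⟨i, hi⟩
  exact pow_ne_zero i (by omega) hi.symm

theorem pAM_pow_eq_one (ha : 1 < a) (hM1 : 1 ∈ M) (hMnd : ∀ m ∈ M, ¬ a ∣ m) (k : ℕ) :
    pAM {x : ℕ | ∃ i : ℕ, x = a ^ i} M (a ^ k) = 1 := by
  have hrepr := isRepr_single (A := {x : ℕ | ∃ i : ℕ, x = a ^ i}) ⟨k, rfl⟩ hM1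
  rw [one_mul] at hrepr
  exact Nat.card_eq_one_iff_exists.mpr
    ⟨⟨_, hrepr⟩, fun g => Subtype.ext (eq_single_of_isRepr_pow ha hMnd g.2)⟩

end PowersOf

theorem liminf_eq_zero_of_frequently_eq_zero {α : Type*} {l : Filter α} {u : α → ℝ}
    (hnonneg : ∀ x, 0 ≤ u x) (hfreq : ∃ᶠ x in l, u x = 0) : liminf u l = 0 :=
  le_antisymm (liminf_le_of_frequently_le (hfreq.mono fun _ hx => hx.le)
      (isBoundedUnder_of ⟨0, hnonneg⟩))
    (le_liminf_of_le (IsCoboundedUnder.of_frequently_le (hfreq.mono fun _ hx => hx.le))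
      (Eventually.of_forall hnonneg))

theorem stmt10_general (a : ℕ) (ha : 2 ≤ a) (M : Set ℕ)
    (hM1 : ∀ m : ℕ, 1 ≤ m → m ≤ a - 1 → m ∈ M)
    (hMnd : ∀ m ∈ M, ¬ a ∣ m) :
    liminf (fun n : ℕ =>
        Real.log (pAM {x : ℕ | ∃ i : ℕ, x = a ^ i} M n) / Real.log n) atTop = 0 ∧
    ¬ Tendsto (fun n : ℕ =>
        Real.log (pAM {x : ℕ | ∃ i : ℕ, x = a ^ i} M n) / Real.log n) atTop atTop := by
  set F : ℕ → ℝ := fun n => Real.log (pAM {x : ℕ | ∃ i : ℕ, x = a ^ i} M n) / Real.log n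
  have hfreq : ∃ᶠ n in atTop, F n = 0 := frequently_atTop.mpr fun N =>
    ⟨a ^ N, (Nat.lt_pow_self ha).le,
      by simp [F, pAM_pow_eq_one ha (hM1 1 le_rfl (by omega)) hMnd N]⟩
  refine ⟨liminf_eq_zero_of_frequently_eq_zero
    (fun n => div_nonneg (Real.log_natCast_nonneg _) (Real.log_natCast_nonneg _)) hfreq,
    fun hT => ?_⟩
  obtain ⟨n, hn0, hnpos⟩ := (hfreq.and_eventually (hT.eventually_gt_atTop 0)).exists
  exact hnpos.ne' hn0

theorem stmt10 (a : ℕ) (ha : 2 ≤ a) (M : Set ℕ) (hMinf : M.Infinite)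
    (hMpos : ∀ m ∈ M, 0 < m)
    (hM1 : ∀ m : ℕ, 1 ≤ m → m ≤ a - 1 → m ∈ M)
    (hMnd : ∀ m ∈ M, ¬ a ∣ m) :
    liminf (fun n : ℕ =>
        Real.log (pAM {x : ℕ | ∃ i : ℕ, x = a ^ i} M n) / Real.log n) atTop = 0 ∧
    ¬ Tendsto (fun n : ℕ =>
        Real.log (pAM {x : ℕ | ∃ i : ℕ, x = a ^ i} M n) / Real.log n) atTop atTop :=
  stmt10_general a ha M hM1 hMnd
end

section
/- Let $A$ and $M$ be infinite sets of positive integers with $A(x) \geq c \log x$ for some $c > 0$ and all sufficiently large $x$. Then $\limsup_{n \to \infty} \frac{\log p_{A,M}(n)}{\log n} = \infty$. -/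
open Filter

/-!
Fix `r` positive elements `T ⊆ M` and let `S = A ∩ [1, X]`, so that `#S ≥ c log X`. Each of the
`r ^ #S` maps `S → T` is a representation of some `n ≤ #S · max T · X < X ^ 4`, so by pigeonhole
some such `n` has `p_{A,M}(n) ≥ r ^ #S / X ^ 4`. Then
`log p_{A,M}(n) / log n ≥ (#S log r - 4 log X) / (4 log X) ≥ c log r / 4 - 1`, which is large for
large `r`, while `n ≥ #S → ∞` as `X → ∞`.
-/

open Finset

theorem IsRepr.mul_le {A M : Set ℕ} {n : ℕ} {f : ℕ →₀ ℕ} (hf : IsRepr A M n f) (a : ℕ) :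
    f a * a ≤ n := by
  by_cases ha : a ∈ f.support
  · rw [← hf.2.2]
    exact Finset.single_le_sum (f := fun i => f i * i) (fun _ _ => Nat.zero_le _) ha
  · simp [Finsupp.notMem_support_iff.mp ha]

theorem setOf_isRepr_finite {A M : Set ℕ} (hA : ∀ a ∈ A, 0 < a) (n : ℕ) :
    {f : ℕ →₀ ℕ | IsRepr A M n f}.Finite := by
  refine (range (n + 1)).finsupp (fun _ => range (n + 1)) |>.finite_toSet.subset fun f hf => ?_
  have hbound : ∀ a ∈ f.support, a ≤ n ∧ f a ≤ n := fun a ha =>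
    ⟨(Nat.le_mul_of_pos_left a (Nat.pos_of_ne_zero (Finsupp.mem_support_iff.mp ha))).trans
      (hf.mul_le a), (Nat.le_mul_of_pos_right _ (hA a (hf.1 a ha))).trans (hf.mul_le a)⟩
  simp only [mem_coe, mem_finsupp_iff, mem_range, Nat.lt_succ_iff]
  refine ⟨fun a ha => mem_range_succ_iff.2 (hbound a ha).1, fun a _ => ?_⟩
  by_cases ha : a ∈ f.support
  · exact (hbound a ha).2
  · simp [Finsupp.notMem_support_iff.mp ha]

theorem pAM_eq_ncard (A M : Set ℕ) (n : ℕ) : pAM A M n = {f | IsRepr A M n f}.ncard :=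
  Nat.card_coe_set_eq _

theorem exists_card_pow_div_le_pAM {A M : Set ℕ} (hA : ∀ a ∈ A, 0 < a) {S T : Finset ℕ}
    (hSA : ↑S ⊆ A) (hTM : ↑T ⊆ M) (hT : ∀ t ∈ T, 0 < t) (hT₀ : T.Nonempty) {X m : ℕ}
    (hSX : ∀ a ∈ S, a ≤ X) (hTm : ∀ t ∈ T, t ≤ m) :
    ∃ n, #S ≤ n ∧ n ≤ #S * (m * X) ∧
      (#T ^ #S : ℝ) / (#S * (m * X) + 1) ≤ pAM A M n := by
  classical
  set F := S.finsupp fun _ => T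
  have hF : ∀ f ∈ F, f.support ⊆ S ∧ ∀ a ∈ S, f a ∈ T := fun f hf => mem_finsupp_iff.1 hf
  have hFcard : #F = #T ^ #S := by rw [card_finsupp, prod_const]
  set weight : (ℕ →₀ ℕ) → ℕ := fun f => f.sum fun a m => m * a
  have hweight : ∀ f ∈ F, weight f = ∑ a ∈ S, f a * a := fun f hf =>
    Finsupp.sum_of_support_subset _ (hF f hf).1 _ fun _ _ => zero_mul _
  have hmaps : ∀ f ∈ F, weight f ∈ Icc #S (#S * (m * X)) := by
    intro f hf
    rw [mem_Icc, hweight f hf]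
    constructor
    · simpa using card_nsmul_le_sum S _ 1 fun a ha =>
        Nat.one_le_iff_ne_zero.2 (Nat.mul_ne_zero (hT _ ((hF f hf).2 a ha)).ne' (hA a (hSA ha)).ne')
    · simpa using sum_le_card_nsmul S _ (m * X) fun a ha =>
        Nat.mul_le_mul (hTm _ ((hF f hf).2 a ha)) (hSX a ha)
  have hrepr : ∀ f ∈ F, IsRepr A M (weight f) f := fun f hf =>
    ⟨fun a ha => hSA ((hF f hf).1 ha), fun a ha => hTM ((hF f hf).2 a ((hF f hf).1 ha)), rfl⟩
  obtain ⟨f₀, hf₀⟩ : F.Nonempty := card_pos.1 (hFcard ▸ pow_pos (card_pos.2 hT₀) _)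
  have hcard : #(Icc #S (#S * (m * X))) • ((#T ^ #S : ℝ) / (#S * (m * X) + 1)) ≤ #F := by
    rw [nsmul_eq_mul, hFcard, Nat.card_Icc, Nat.cast_pow]
    refine (mul_le_mul_of_nonneg_right ?_ (by positivity)).trans_eq
      (mul_div_cancel₀ _ (by positivity))
    exact_mod_cast Nat.sub_le _ _
  obtain ⟨n, hn, hfiber⟩ :=
    exists_le_card_fiber_of_nsmul_le_card_of_maps_to hmaps ⟨_, hmaps f₀ hf₀⟩ hcard
  refine ⟨n, (mem_Icc.1 hn).1, (mem_Icc.1 hn).2, hfiber.trans ?_⟩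
  rw [Nat.cast_le, ← Set.ncard_coe_finset, pAM_eq_ncard]
  exact Set.ncard_le_ncard (fun f hf => by
    obtain ⟨hfF, rfl⟩ := mem_filter.1 hf
    exact hrepr f hfF) (setOf_isRepr_finite hA _)

theorem cnt_natCast (S : Set ℕ) [DecidablePred (· ∈ S)] (X : ℕ) :
    cnt S X = #{a ∈ Iic X | a ∈ S} := by
  rw [cnt, ← Set.ncard_coe_finset, ← Nat.card_coe_set_eq]
  congr
  ext a
  simp [and_comm]

theorem le_log_div_log_of_pow_div_le {K c : ℝ} {k r n B X p : ℕ} (hK : 0 ≤ K)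
    (hr : 4 * (K + 1) ≤ c * Real.log r) (hk : c * Real.log X ≤ k) (hB : B + 1 ≤ X ^ 4)
    (hn : 2 ≤ n) (hnB : n ≤ B) (hp : (r ^ k : ℝ) / (B + 1) ≤ p) :
    K ≤ Real.log p / Real.log n := by
  have hr₀ : 0 < (r : ℝ) := by
    rcases Nat.eq_zero_or_pos r with rfl | hr₀
    · simp only [Nat.cast_zero, Real.log_zero, mul_zero] at hr
      linarith
    · exact_mod_cast hr₀
  have hlogn : 0 < Real.log n := Real.log_pos (by exact_mod_cast hn)
  have hlogB : Real.log n ≤ Real.log (B + 1) :=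
    Real.log_le_log (by positivity) (by exact_mod_cast hnB.trans (Nat.le_succ B))
  have hlogX : Real.log (B + 1) ≤ 4 * Real.log X :=
    calc Real.log (B + 1) ≤ Real.log ((X : ℝ) ^ 4) :=
          Real.log_le_log (by positivity) (by exact_mod_cast hB)
      _ = 4 * Real.log X := by rw [Real.log_pow]; norm_num
  have hlogp : k * Real.log r - Real.log (B + 1) ≤ Real.log p := by
    rw [← Real.log_pow, ← Real.log_div (by positivity) (by positivity)]
    exact Real.log_le_log (by positivity) hp
  have hkr : (K + 1) * Real.log (B + 1) ≤ k * Real.log r :=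
    calc (K + 1) * Real.log (B + 1) ≤ (K + 1) * (4 * Real.log X) := by gcongr
      _ ≤ c * Real.log r * Real.log X := by nlinarith [Real.log_natCast_nonneg X]
      _ ≤ k * Real.log r := by nlinarith [Real.log_natCast_nonneg r]
  rw [le_div_iff₀ hlogn]
  nlinarith

theorem frequently_le_log_pAM_div_log {A M : Set ℕ} (hM : M.Infinite) (hA : ∀ a ∈ A, 0 < a)
    {c : ℝ} (hc : 0 < c) (hAx : ∀ᶠ x : ℝ in atTop, c * Real.log x ≤ cnt A x) (K : ℝ) :
    ∃ᶠ n : ℕ in atTop, K ≤ Real.log (pAM A M n) / Real.log n := by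
  classical
  wlog hK : 0 ≤ K generalizing K
  · exact (this 0 le_rfl).mono fun n hn => (not_le.1 hK).le.trans hn
  have hlog : Tendsto (fun x : ℕ => c * Real.log x) atTop atTop :=
    (Real.tendsto_log_atTop.comp tendsto_natCast_atTop_atTop).const_mul_atTop hc
  obtain ⟨r, hr⟩ := (hlog.eventually_ge_atTop (4 * (K + 1))).exists
  have hr₀ : r ≠ 0 := by
    rintro rfl
    simp only [Nat.cast_zero, Real.log_zero, mul_zero] at hr
    linarith
  -- Zero multiplicities are excluded so that every map `S → T` has weight at least `#S`.
  obtain ⟨T, hTM, hTr⟩ := (hM.sdiff (Set.finite_singleton 0)).exists_subset_card_eq r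
  rw [frequently_atTop]
  intro N
  obtain ⟨X, hXA, hmX, hX, hNX⟩ := ((tendsto_natCast_atTop_atTop.eventually hAx).and
    ((eventually_ge_atTop (T.sup id)).and ((eventually_ge_atTop 2).and
      (hlog.eventually_ge_atTop (N + 2))))).exists
  set S : Finset ℕ := {a ∈ Iic X | a ∈ A}
  have hS : c * Real.log X ≤ #S := by simpa [cnt_natCast] using hXA
  have hS_le : #S ≤ X + 1 := (card_filter_le _ _).trans (Nat.card_Iic X).le
  obtain ⟨n, hSn, hnB, hp⟩ := exists_card_pow_div_le_pAM hA (S := S) (T := T)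
    (fun a ha => (mem_filter.1 ha).2) (fun t ht => (hTM ht).1)
    (fun t ht => Nat.pos_of_ne_zero (hTM ht).2) (card_pos.1 (hTr ▸ Nat.pos_of_ne_zero hr₀))
    (fun a ha => mem_Iic.1 (mem_filter.1 ha).1) (fun t ht => le_sup (f := id) ht)
  have hNn : N + 2 ≤ n := hSn.trans' (by exact_mod_cast hNX.trans hS)
  refine ⟨n, by omega,
    le_log_div_log_of_pow_div_le hK (hTr ▸ hr) hS ?_ (by omega) hnB (by exact_mod_cast hp)⟩
  calc #S * (T.sup id * X) + 1 ≤ (X + 1) * (X * X) + 1 := by gcongr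
    _ ≤ X ^ 4 := by
      nlinarith [Nat.mul_le_mul hX hX, Nat.mul_le_mul_right (X * X) hX,
        Nat.mul_le_mul_right (X * X * X) hX]

theorem EReal.limsup_coe_eq_top {α : Type*} {l : Filter α} {u : α → ℝ}
    (h : ∀ K : ℝ, ∃ᶠ x in l, K ≤ u x) : Filter.limsup (fun x => (u x : EReal)) l = ⊤ := by
  refine (EReal.eq_top_iff_forall_lt _).2 fun K => ?_
  refine (EReal.coe_lt_coe_iff.2 (lt_add_one K)).trans_le (Filter.le_limsup_of_frequently_le' ?_)
  exact (h (K + 1)).mono fun x hx => EReal.coe_le_coe_iff.2 hx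

theorem stmt14_general (A M : Set ℕ) (hM : M.Infinite)
    (hApos : ∀ a ∈ A, 0 < a)
    (c : ℝ) (hc : 0 < c) (hAx : ∀ᶠ x : ℝ in atTop, c * Real.log x ≤ cnt A x) :
    limsup (fun n : ℕ => ((Real.log (pAM A M n) / Real.log n : ℝ) : EReal)) atTop = ⊤ :=
  EReal.limsup_coe_eq_top (frequently_le_log_pAM_div_log hM hApos hc hAx)

theorem stmt14 (A M : Set ℕ) (hA : A.Infinite) (hM : M.Infinite)
    (hApos : ∀ a ∈ A, 0 < a) (hMpos : ∀ m ∈ M, 0 < m)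
    (c : ℝ) (hc : 0 < c) (hAx : ∀ᶠ x : ℝ in atTop, c * Real.log x ≤ cnt A x) :
    limsup (fun n : ℕ => ((Real.log (pAM A M n) / Real.log n : ℝ) : EReal)) atTop = ⊤ :=
  stmt14_general A M hM hApos c hc hAx
end
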